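/- The signed curvature of a cubic Bézier curve does not change sign if the control polygon is convex: if the cross products (P₁-P₀)×(P₂-P₁), (P₂-P₁)×(P₃-P₂), and (P₁-P₀)×(P₃-P₂) are all nonnegative, then the cross product B'(u)×B''(u) is nonnegative for all u ∈ [0,1]. -/

import Mathlib

noncomputable def Bez (P0 P1 P2 P3 : ℝ × ℝ) (u : ℝ) : ℝ × ℝ :=
  ((1-u)^3) • P0 + (3*(1-u)^2*u) • P1 + (3*(1-u)*u^2) • P2 + (u^3) • P3

def cross (v w : ℝ × ℝ) : ℝ := v.1 * w.2 - v.2 * w.1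

noncomputable def Bez1 (P0 P1 P2 P3 : ℝ × ℝ) (u : ℝ) : ℝ × ℝ :=
  (-3*(1-u)^2) • P0 + (3 - 12*u + 9*u^2) • P1 + (6*u - 9*u^2) • P2 + (3*u^2) • P3

noncomputable def Bez2 (P0 P1 P2 P3 : ℝ × ℝ) (u : ℝ) : ℝ × ℝ :=
  (6*(1-u)) • P0 + (-12 + 18*u) • P1 + (6 - 18*u) • P2 + (6*u) • P3

lemma hasDeriv_Bez (P0 P1 P2 P3 : ℝ × ℝ) (u : ℝ) :
    HasDerivAt (Bez P0 P1 P2 P3) (Bez1 P0 P1 P2 P3 u) u := by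
  have hu : HasDerivAt (fun u : ℝ => 1 - u) (-1) u := by
    simpa using (hasDerivAt_id' u).const_sub (1:ℝ)
  have h :=
    ((((hu.pow 3).smul_const P0).add
      ((((hu.pow 2).mul (hasDerivAt_id u)).const_mul 3).smul_const P1)).add
      ((((hu.mul ((hasDerivAt_pow 2 u))).const_mul 3)).smul_const P2)).add
      ((hasDerivAt_pow 3 u).smul_const P3)
  refine HasDerivAt.congr_deriv (HasDerivAt.congr_of_eventuallyEq h (Filter.Eventually.of_forall fun v => ?_)) ?_
  · simp [Bez]; module
  · simp [Bez1]; module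

lemma hasDeriv_Bez1 (P0 P1 P2 P3 : ℝ × ℝ) (u : ℝ) :
    HasDerivAt (Bez1 P0 P1 P2 P3) (Bez2 P0 P1 P2 P3 u) u := by
  have hu : HasDerivAt (fun u : ℝ => 1 - u) (-1) u := by
    simpa using (hasDerivAt_id' u).const_sub (1:ℝ)
  have hid : HasDerivAt (fun u : ℝ => u) 1 u := hasDerivAt_id u
  have h2 : HasDerivAt (fun u : ℝ => u^2) (2*u) u := by simpa using hasDerivAt_pow 2 u
  have h :=
    ((((hu.pow 2).const_mul (-3)).smul_const P0).add
      (((hasDerivAt_const u (3:ℝ)).sub ((hid.const_mul 12).sub (h2.const_mul 9))).smul_const P1)).add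
      (((hid.const_mul 6).sub (h2.const_mul 9)).smul_const P2) |>.add
      ((h2.const_mul 3).smul_const P3)
  refine HasDerivAt.congr_deriv (HasDerivAt.congr_of_eventuallyEq h (Filter.Eventually.of_forall fun v => ?_)) ?_
  · simp [Bez1]; module
  · simp [Bez2]; module

theorem bezier_curvature_sign (P0 P1 P2 P3 : ℝ × ℝ)
    (h1 : 0 ≤ cross (P1 - P0) (P2 - P1))
    (h2 : 0 ≤ cross (P2 - P1) (P3 - P2))
    (h3 : 0 ≤ cross (P1 - P0) (P3 - P2)) :
    ∀ u ∈ Set.Icc (0:ℝ) 1,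
      0 ≤ cross (deriv (Bez P0 P1 P2 P3) u) (deriv (deriv (Bez P0 P1 P2 P3)) u) := by
  intro u hu
  obtain ⟨hu0, hu1⟩ := hu
  have hd1 : deriv (Bez P0 P1 P2 P3) = Bez1 P0 P1 P2 P3 := by
    funext v; exact (hasDeriv_Bez P0 P1 P2 P3 v).deriv
  rw [hd1]
  rw [(hasDeriv_Bez1 P0 P1 P2 P3 u).deriv]
  have key : cross (Bez1 P0 P1 P2 P3 u) (Bez2 P0 P1 P2 P3 u) =
      18 * ((1-u)^3 * cross (P1 - P0) (P2 - P1)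
        + (1-u)^2 * u * (cross (P1 - P0) (P2 - P1) + cross (P1 - P0) (P3 - P2))
        + (1-u) * u^2 * (cross (P2 - P1) (P3 - P2) + cross (P1 - P0) (P3 - P2))
        + u^3 * cross (P2 - P1) (P3 - P2)) := by
    simp [cross, Bez1, Bez2, Prod.fst_sub, Prod.snd_sub]
    ring
  rw [key]
  have w0 : (0:ℝ) ≤ 1 - u := by linarith
  positivity
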